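/- If a sequence of lengths is defined by repeatedly bisecting the longest element starting from the single element 1, then after m bisections all elements have lengths 2^{-i} or 2^{-(i+1)} where 2^i − 1 ≤ m ≤ 2^{i+1} − 2, and the maximum element equals 2^{-i} unless m = 2^{i+1}−1 when all elements equal 2^{-(i+1)}. -/
import Mathlib


/-- One bisection step on a multiset of lengths: a maximal element is removed and
replaced by its two halves. -/
def Halve (s t : Multiset ℝ) : Prop :=
  ∃ x ∈ s, (∀ y ∈ s, y ≤ x) ∧ t = x / 2 ::ₘ x / 2 ::ₘ s.erase x

lemma key (s : ℕ → Multiset ℝ) (h0 : s 0 = {(1 : ℝ)})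
    (hs : ∀ n, Halve (s n) (s (n + 1))) (m : ℕ) :
    ∃ i k : ℕ, k < 2 ^ i ∧ m = 2 ^ i - 1 + k ∧
      s m = Multiset.replicate (2 ^ i - k) ((1:ℝ) / 2 ^ i)
          + Multiset.replicate (2 * k) ((1:ℝ) / 2 ^ (i + 1)) := by
  induction m with
  | zero =>
    refine ⟨0, 0, by norm_num, by norm_num, ?_⟩
    simp [h0, Multiset.replicate_one]
  | succ m ih =>
    obtain ⟨i, k, hk, hm, hrep⟩ := ih
    obtain ⟨x, hx, hmax, ht⟩ := hs m
    set a : ℝ := (1:ℝ) / 2 ^ i with ha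
    set b : ℝ := (1:ℝ) / 2 ^ (i + 1) with hb
    have hba : b < a := by
      rw [ha, hb]
      apply div_lt_div_of_pos_left one_pos (by positivity)
      exact pow_lt_pow_right₀ one_lt_two (by omega)
    have hamem : a ∈ s m := by
      rw [hrep, Multiset.mem_add]
      left
      rw [Multiset.mem_replicate]
      exact ⟨by omega, rfl⟩
    have hxa : x = a := by
      have h1 : a ≤ x := hmax a hamem
      have h2 : x = a ∨ x = b := by
        rw [hrep, Multiset.mem_add, Multiset.mem_replicate, Multiset.mem_replicate] at hx
        rcases hx with ⟨_, h⟩ | ⟨_, h⟩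
        · exact Or.inl h
        · exact Or.inr h
      rcases h2 with h | h
      · exact h
      · exfalso; rw [h] at h1; linarith
    have hx2 : x / 2 = b := by
      rw [hxa, ha, hb, pow_succ]; ring
    have hn : 2 ^ i - k = (2 ^ i - k - 1) + 1 := by omega
    have herase : (s m).erase x =
        Multiset.replicate (2 ^ i - k - 1) a + Multiset.replicate (2 * k) b := by
      rw [hrep, hxa, hn, Multiset.replicate_succ, Multiset.cons_add,
        Multiset.erase_cons_head]
      simp
    have hsm1 : s (m + 1) =
        Multiset.replicate (2 ^ i - k - 1) a + Multiset.replicate (2 * k + 2) b := by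
      rw [ht, hx2, herase]
      rw [show 2 * k + 2 = (2 * k + 1) + 1 from rfl, Multiset.replicate_succ,
        Multiset.replicate_succ]
      simp [Multiset.add_cons]
    rcases eq_or_lt_of_le (Nat.succ_le_of_lt hk) with heq | hlt
    · -- k + 1 = 2 ^ i : move to level i + 1
      refine ⟨i + 1, 0, by positivity, ?_, ?_⟩
      · have : (2:ℕ) ^ (i + 1) = 2 ^ i + 2 ^ i := by rw [pow_succ]; ring
        omega
      rw [hsm1]
      have h1 : 2 ^ i - k - 1 = 0 := by omega
      have h2 : 2 * k + 2 = 2 ^ (i + 1) - 0 := by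
        have : (2:ℕ) ^ (i + 1) = 2 ^ i + 2 ^ i := by rw [pow_succ]; ring
        omega
      rw [h1, h2]
      simp [hb]
    · refine ⟨i, k + 1, hlt, by omega, ?_⟩
      rw [hsm1, show 2 ^ i - (k + 1) = 2 ^ i - k - 1 by omega,
        show 2 * (k + 1) = 2 * k + 2 by ring]

/-- If a multiset of lengths is obtained by repeatedly bisecting a
longest element starting from the single element `1`, then after `m` bisections all
elements have lengths `2^{-i}` or `2^{-(i+1)}`, where `2^i - 1 ≤ m ≤ 2^{i+1} - 2`, and
the maximum element equals `2^{-i}`; except when `m = 2^{i+1} - 1`, in which case all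
elements equal `2^{-(i+1)}`. -/
theorem stmt16 (s : ℕ → Multiset ℝ) (h0 : s 0 = {(1 : ℝ)})
    (hs : ∀ n, Halve (s n) (s (n + 1))) (m : ℕ) :
    (∀ i : ℕ, 2 ^ i - 1 ≤ m → m ≤ 2 ^ (i + 1) - 2 →
      (∀ x ∈ s m, x = (1 : ℝ) / 2 ^ i ∨ x = (1 : ℝ) / 2 ^ (i + 1)) ∧
      ∃ x ∈ s m, x = (1 : ℝ) / 2 ^ i ∧ ∀ y ∈ s m, y ≤ x) ∧
    (∀ i : ℕ, m = 2 ^ (i + 1) - 1 → ∀ x ∈ s m, x = (1 : ℝ) / 2 ^ (i + 1)) := by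
  obtain ⟨i, k, hk, hm, hrep⟩ := key s h0 hs m
  have hpi : (1:ℕ) ≤ 2 ^ i := Nat.one_le_two_pow
  constructor
  · intro j hj1 hj2
    have hpj : (1:ℕ) ≤ 2 ^ j := Nat.one_le_two_pow
    have e0 : (2:ℕ) ^ (j + 1) = 2 ^ j + 2 ^ j := by rw [pow_succ]; ring
    have e1 : (2:ℕ) ^ (i + 1) = 2 ^ i + 2 ^ i := by rw [pow_succ]; ring
    have hji : j = i := by
      have hA : 2 ^ i < 2 ^ (j + 1) := by
        generalize (2:ℕ) ^ i = p at hm hpi ⊢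
        generalize (2:ℕ) ^ (j + 1) = r at e0 hj2 ⊢
        generalize (2:ℕ) ^ j = q at e0 hpj
        omega
      have hB : 2 ^ j < 2 ^ (i + 1) := by
        generalize (2:ℕ) ^ (i + 1) = r at e1 ⊢
        generalize (2:ℕ) ^ i = p at hm hk hpi e1
        generalize (2:ℕ) ^ j = q at hj1 ⊢
        omega
      have h1 := (Nat.pow_lt_pow_iff_right Nat.one_lt_two).mp hA
      have h2 := (Nat.pow_lt_pow_iff_right Nat.one_lt_two).mp hB
      omega
    subst hji
    constructor
    · intro x hx
      rw [hrep, Multiset.mem_add, Multiset.mem_replicate, Multiset.mem_replicate] at hx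
      rcases hx with ⟨_, h⟩ | ⟨_, h⟩
      · exact Or.inl h
      · exact Or.inr h
    · refine ⟨(1:ℝ) / 2 ^ j, ?_, rfl, ?_⟩
      · rw [hrep, Multiset.mem_add]
        left
        rw [Multiset.mem_replicate]
        exact ⟨by omega, rfl⟩
      · intro y hy
        rw [hrep, Multiset.mem_add, Multiset.mem_replicate, Multiset.mem_replicate] at hy
        have hle : (1:ℝ) / 2 ^ (j + 1) ≤ 1 / 2 ^ j := by
          apply div_le_div_of_nonneg_left one_pos.le (by positivity)
          exact pow_le_pow_right₀ one_le_two (by omega)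
        rcases hy with ⟨_, h⟩ | ⟨_, h⟩
        · rw [h]
        · rw [h]; exact hle
  · intro j hmj
    have hpj : (1:ℕ) ≤ 2 ^ (j + 1) := Nat.one_le_two_pow
    have e1 : (2:ℕ) ^ (i + 1) = 2 ^ i + 2 ^ i := by rw [pow_succ]; ring
    have eA : 2 ^ i ≤ 2 ^ (j + 1) ∧ 2 ^ (j + 1) < 2 ^ (i + 1) := by
      generalize (2:ℕ) ^ (i + 1) = r at e1 ⊢
      generalize (2:ℕ) ^ i = p at hm hk hpi e1 ⊢
      generalize (2:ℕ) ^ (j + 1) = q at hmj hpj ⊢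
      omega
    obtain ⟨e2, e3⟩ := eA
    have hij : i ≤ j + 1 := (Nat.pow_le_pow_iff_right Nat.one_lt_two).mp e2
    have hij2 : j + 1 < i + 1 := (Nat.pow_lt_pow_iff_right Nat.one_lt_two).mp e3
    have hji : j + 1 = i := by omega
    subst hji
    have hk0 : k = 0 := by
      generalize (2:ℕ) ^ (j + 1) = q at hm hmj hpj
      omega
    subst hk0
    intro x hx
    rw [hrep] at hx
    simp only [Multiset.mem_add, Multiset.mem_replicate] at hx
    rcases hx with ⟨_, h⟩ | ⟨hc, h⟩
    · exact h
    · exact (hc rfl).elim
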